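/- If δ is a symbolic ternary metric on X that is fully resolved (satisfies condition (*)), then the quartet system consisting of all quartets generated by δ is complete: for every 4-element subset {a,b,c,d} of X, exactly one of the three quartets ab|cd, ac|bd, ad|bc is generated by δ. -/

import Mathlib

namespace PhyloPaper

variable {V X M : Type}

/-- The degree of a vertex: the number of its neighbors. -/
noncomputable def deg (G : SimpleGraph V) (v : V) : ℕ := (G.neighborSet v).ncard

/-- `v` lies on the (unique, in a tree) path between `x` and `y`. -/
def OnPath (G : SimpleGraph V) (x y v : V) : Prop :=
  ∀ p : G.Walk x y, p.IsPath → v ∈ p.support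

/-- `m` is a median of `x, y, z`: it lies on all three pairwise paths. -/
def IsMedian (G : SimpleGraph V) (x y z m : V) : Prop :=
  OnPath G x y m ∧ OnPath G y z m ∧ OnPath G x z m

/-- An (unrooted) phylogenetic tree on `X`: a tree whose leaf set is (the image of) `X`
and which has no vertex of degree 2. -/
structure IsPhyloTree (G : SimpleGraph V) (leaf : X → V) : Prop where
  isTree : G.IsTree
  leaf_inj : Function.Injective leaf
  leaf_iff : ∀ v : V, (∃ x : X, leaf x = v) ↔ deg G v = 1
  no_deg_two : ∀ v : V, deg G v ≠ 2

/-- A phylogenetic tree is binary if every interior vertex (degree ≥ 2) has degree 3. -/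
def IsBinary (G : SimpleGraph V) : Prop := ∀ v : V, 2 ≤ deg G v → deg G v = 3

/-- A symbolic dating map sends every leaf to `⊙` (modelled as `none`). -/
def IsDatingMap (leaf : X → V) (t : V → Option M) : Prop := ∀ x : X, t (leaf x) = none

/-- A dating map is discriminating if adjacent vertices get different values. -/
def Discriminating (G : SimpleGraph V) (t : V → Option M) : Prop :=
  ∀ u v : V, G.Adj u v → t u ≠ t v

/-- `δ` is the ternary map induced by the dated tree `(G, leaf, t)`:
`δ x y z = t (med (leaf x) (leaf y) (leaf z))`. -/
def InducedDelta (G : SimpleGraph V) (leaf : X → V) (t : V → Option M)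
    (δ : X → X → X → Option M) : Prop :=
  ∀ x y z : X, ∃ m : V, IsMedian G (leaf x) (leaf y) (leaf z) m ∧ δ x y z = t m

/-- The (well-defined, for symmetric `δ`) value of `δ` on a 3-element subset `T` is `a`. -/
def ValOn (δ : X → X → X → Option M) [DecidableEq X] (T : Finset X) (a : Option M) : Prop :=
  ∃ x y z : X, x ≠ y ∧ x ≠ z ∧ y ≠ z ∧ T = {x, y, z} ∧ δ x y z = a

/-- `S` is `n`-`m` partitioned by `δ`: `δ` takes exactly two values on the 3-element
subsets of `S`, one value on exactly `n` of them and the other on exactly `m` of them. -/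
def Partitioned [DecidableEq X] (δ : X → X → X → Option M) (S : Finset X) (n m : ℕ) : Prop :=
  ∃ a b : Option M, a ≠ b ∧
    {T : Finset X | T ∈ S.powersetCard 3 ∧ ValOn δ T a}.ncard = n ∧
    {T : Finset X | T ∈ S.powersetCard 3 ∧ ValOn δ T b}.ncard = m ∧
    ∀ T ∈ S.powersetCard 3, ValOn δ T a ∨ ValOn δ T b

/-- Condition (1): `δ` is symmetric under all permutations of its arguments. -/
def Symm3 (δ : X → X → X → Option M) : Prop :=
  ∀ x y z : X, δ x y z = δ y x z ∧ δ x y z = δ x z y ∧ δ x y z = δ z y x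

/-- Condition (2): `δ x y z = ⊙` iff `x, y, z` are not pairwise distinct. -/
def VanishCond (δ : X → X → X → Option M) : Prop :=
  ∀ x y z : X, δ x y z = none ↔ (x = y ∨ y = z ∨ x = z)

/-- `a, b, c, d` are pairwise distinct. -/
def P4 (a b c d : X) : Prop := a ≠ b ∧ a ≠ c ∧ a ≠ d ∧ b ≠ c ∧ b ≠ d ∧ c ≠ d

/-- `a, b, c, d, e` are pairwise distinct. -/
def P5 (a b c d e : X) : Prop := P4 a b c d ∧ a ≠ e ∧ b ≠ e ∧ c ≠ e ∧ d ≠ e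

/-- Condition (3): on four distinct taxa `δ` takes at most 2 values, and if exactly 2,
then the 4-set is 2-2 partitioned. -/
def FourPointCond [DecidableEq X] (δ : X → X → X → Option M) : Prop :=
  ∀ x y z u : X, P4 x y z u →
    ({δ x y z, δ x y u, δ x z u, δ y z u} : Set (Option M)).ncard ≤ 2 ∧
    (({δ x y z, δ x y u, δ x z u, δ y z u} : Set (Option M)).ncard = 2 →
      Partitioned δ ({x, y, z, u} : Finset X) 2 2)

/-- Condition (4): no 5-element subset of `X` is 5-5 partitioned by `δ`. -/
def FivePointCond [DecidableEq X] (δ : X → X → X → Option M) : Prop :=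
  ∀ S : Finset X, S.card = 5 → ¬ Partitioned δ S 5 5

/-- A symbolic ternary metric. -/
def IsSymbolicTernaryMetric [DecidableEq X] (δ : X → X → X → Option M) : Prop :=
  Symm3 δ ∧ VanishCond δ ∧ FourPointCond δ ∧ FivePointCond δ

/-- Condition (*): `δ` is fully resolved. -/
def FullyResolved [DecidableEq X] (δ : X → X → X → Option M) : Prop :=
  ∀ x y z u : X, P4 x y z u →
    ({δ x y z, δ x y u, δ x z u, δ y z u} : Set (Option M)).ncard = 1 →
    ∃ e : X, Partitioned δ ({x, y, z, u, e} : Finset X) 4 6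

/-- The tree displays the quartet `ab|cd`: the path from `a` to `b` is
vertex-disjoint from the path from `c` to `d`. -/
def Displays (G : SimpleGraph V) (leaf : X → V) (a b c d : X) : Prop :=
  ∃ p : G.Walk (leaf a) (leaf b), p.IsPath ∧
    ∃ q : G.Walk (leaf c) (leaf d), q.IsPath ∧ ∀ v : V, v ∈ p.support → v ∉ q.support

/-- `Q a b c d` represents membership of the quartet `ab|cd`; a quartet system must be
invariant under the symmetries of quartets and only contain genuine quartets. -/
def IsQuartetSystem (Q : X → X → X → X → Prop) : Prop :=
  ∀ a b c d : X, (Q a b c d → P4 a b c d) ∧ (Q a b c d ↔ Q b a c d) ∧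
    (Q a b c d ↔ Q a b d c) ∧ (Q a b c d ↔ Q c d a b)

/-- Thin: at most one of the three quartets on any 4 taxa. -/
def Thin (Q : X → X → X → X → Prop) : Prop :=
  ∀ a b c d : X, P4 a b c d →
    ¬(Q a b c d ∧ Q a c b d) ∧ ¬(Q a b c d ∧ Q a d b c) ∧ ¬(Q a c b d ∧ Q a d b c)

/-- Transitive quartet system. -/
def TransitiveQ (Q : X → X → X → X → Prop) : Prop :=
  ∀ a b c d e : X, P5 a b c d e → Q a b c e → Q a b d e → Q a b c d

/-- Saturated quartet system. -/
def SaturatedQ (Q : X → X → X → X → Prop) : Prop :=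
  ∀ a b c d e : X, P5 a b c d e → Q a b c d → (Q a e c d ∨ Q a b c e)

/-- Complete: exactly one of the three quartets on any 4 distinct taxa. -/
def CompleteQ (Q : X → X → X → X → Prop) : Prop :=
  ∀ a b c d : X, P4 a b c d →
    (Q a b c d ∨ Q a c b d ∨ Q a d b c) ∧
    ¬(Q a b c d ∧ Q a c b d) ∧ ¬(Q a b c d ∧ Q a d b c) ∧ ¬(Q a c b d ∧ Q a d b c)

/-- `δ` generates the quartet `xy|zu`. -/
def Generates (δ : X → X → X → Option M) (x y z u : X) : Prop :=
  P4 x y z u ∧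
  ((δ x z u = δ y z u ∧ δ y z u ≠ δ x y z ∧ δ x y z = δ x y u) ∨
   (δ x y z = δ x y u ∧ δ x y u = δ x z u ∧ δ x z u = δ y z u ∧
    ∃ e : X, δ x y e = δ x y z ∧ δ z u e = δ x y z ∧
      δ x u e ≠ δ x y z ∧ δ x u e = δ x z e ∧ δ x z e = δ y z e ∧ δ y z e = δ y u e))

/-- A rooted phylogenetic tree on `X` with root `ρ`: a tree whose leaves (in the rooted
sense: out-degree 0, i.e. non-root vertices of degree 1) are exactly the image of `X`,
and with no non-root vertex of in-degree one and out-degree one (i.e. degree 2). -/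
structure IsRootedPhyloTree (G : SimpleGraph V) (ρ : V) (leaf : X → V) : Prop where
  isTree : G.IsTree
  leaf_inj : Function.Injective leaf
  leaf_iff : ∀ v : V, (∃ x : X, leaf x = v) ↔ (v ≠ ρ ∧ deg G v = 1)
  no_in_out_deg_one : ∀ v : V, v ≠ ρ → deg G v ≠ 2

/-- `d` is the binary map induced by the rooted dated tree:
`d x y = t (lca x y)`, where the last common ancestor is the median of `ρ, x, y`. -/
def InducedD (G : SimpleGraph V) (ρ : V) (leaf : X → V) (t : V → Option M)
    (d : X → X → Option M) : Prop :=
  ∀ x y : X, ∃ m : V, IsMedian G ρ (leaf x) (leaf y) m ∧ d x y = t m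

/-- Symbolic ultrametric: conditions (U1)-(U4). -/
def IsSymbolicUltrametric (d : X → X → Option M) : Prop :=
  (∀ x y : X, d x y = none ↔ x = y) ∧
  (∀ x y : X, d x y = d y x) ∧
  (∀ x y z : X, ({d x y, d x z, d y z} : Set (Option M)).ncard ≤ 2) ∧
  ¬ ∃ x y u v : X, P4 x y u v ∧ d x y = d y u ∧ d y u = d u v ∧
      d u v ≠ d y v ∧ d y v = d x v ∧ d x v = d x u

/-- `x` and `y` are `m`-equivalent with respect to `δ`. -/
def MEquiv (δ : X → X → X → Option M) (m : Option M) (x y : X) : Prop :=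
  (∃ z : X, δ x y z = m) ∧
  ∀ u v : X, u ≠ x → u ≠ y → v ≠ x → v ≠ y → (δ x u v = m ↔ δ y u v = m)

/-- `x ∼_δ y`: `x` and `y` are `m`-equivalent for some `m`. -/
def DeltaEquiv (δ : X → X → X → Option M) (x y : X) : Prop :=
  ∃ m : Option M, MEquiv δ m x y

/-- `C` is a pseudo-cherry of the tree: `C` has at least 2 elements and is exactly the
set of leaves adjacent to some interior vertex `v`. -/
def IsPseudoCherry (G : SimpleGraph V) (leaf : X → V) (C : Set X) : Prop :=
  2 ≤ C.ncard ∧ ∃ v : V, 2 ≤ deg G v ∧ C = {x : X | G.Adj (leaf x) v}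

/-!
On four taxa the four-point condition leaves two possibilities: a 2-2 split of the four values,
which generates its quartet directly, or a constant value `v`. In the constant case full
resolution supplies `e` such that `{a, b, c, d, e}` is 4-6 partitioned, so no value lies on seven
of its ten triples. Hence every 4-subset through `e` is split 2-2 as well, exactly one triple
through `e` over each triangle of `{a, b, c, d}` has value `v`, and these triples pair up
`a, b, c, d` along a perfect matching: the generated quartet.

Two quartets of the first kind, or one of each kind, already contradict each other on the four
taxa. If `ab|cd` and `ac|bd` are generated through witnesses `e` and `f`, the four-point condition
on the 4-subsets through `e` and `f` either produces three distinct values on `{b, d, e, f}`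
(when `δ a d e ≠ δ a d f`) or makes `{b, c, d, e, f}` or `{a, b, d, e, f}` 5-5 partitioned,
which the five-point condition excludes.
-/

open Finset

section TripleValues

variable {δ : X → X → X → Option M}

theorem Symm3.swap12 (hs : Symm3 δ) (x y z : X) : δ x y z = δ y x z := (hs x y z).1

theorem Symm3.swap23 (hs : Symm3 δ) (x y z : X) : δ x y z = δ x z y := (hs x y z).2.1

theorem VanishCond.ne_none (hvan : VanishCond δ) {x y z : X} (hxy : x ≠ y) (hxz : x ≠ z)
    (hyz : y ≠ z) : δ x y z ≠ none := by
  rw [Ne, hvan]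
  tauto

theorem VanishCond.distinct (hvan : VanishCond δ) {x y z : X} (h : δ x y z ≠ none) :
    x ≠ y ∧ x ≠ z ∧ y ≠ z := by
  rw [Ne, hvan] at h
  tauto

variable [DecidableEq X]

theorem Symm3.eq_of_finset_eq (hs : Symm3 δ) {x y z x' y' z' : X}
    (hxy : x ≠ y) (hxz : x ≠ z) (hyz : y ≠ z)
    (h : ({x, y, z} : Finset X) = {x', y', z'}) : δ x y z = δ x' y' z' := by
  have hx : x ∈ ({x', y', z'} : Finset X) := h ▸ by simp
  have hy : y ∈ ({x', y', z'} : Finset X) := h ▸ by simp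
  have hz : z ∈ ({x', y', z'} : Finset X) := h ▸ by simp
  have := hs.swap12; have := hs.swap23
  simp only [mem_insert, mem_singleton] at hx hy hz
  rcases hx with rfl | rfl | rfl <;> rcases hy with rfl | rfl | rfl <;>
    rcases hz with rfl | rfl | rfl <;> grind

theorem Symm3.valOn_iff (hs : Symm3 δ) {x y z : X} (hxy : x ≠ y) (hxz : x ≠ z) (hyz : y ≠ z)
    (a : Option M) : ValOn δ {x, y, z} a ↔ δ x y z = a :=
  ⟨fun ⟨_, _, _, _, _, _, hT, ha⟩ => (hs.eq_of_finset_eq hxy hxz hyz hT).trans ha,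
    fun ha => ⟨x, y, z, hxy, hxz, hyz, rfl, ha⟩⟩

theorem Symm3.valOn_unique (hs : Symm3 δ) {T : Finset X} {a b : Option M}
    (ha : ValOn δ T a) (hb : ValOn δ T b) : a = b := by
  obtain ⟨x, y, z, hxy, hxz, hyz, rfl, rfl⟩ := ha
  exact (hs.valOn_iff hxy hxz hyz b).1 hb

end TripleValues

theorem P4.injective {x y z u : X} (hp : P4 x y z u) : Function.Injective ![x, y, z, u] := by
  obtain ⟨_, _, _, _, _, _⟩ := hp
  intro i j hij
  fin_cases i <;> fin_cases j <;> simp_all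

theorem P5.injective {a b c d e : X} (hp : P5 a b c d e) :
    Function.Injective ![a, b, c, d, e] := by
  obtain ⟨⟨_, _, _, _, _, _⟩, _, _, _, _⟩ := hp
  intro i j hij
  fin_cases i <;> fin_cases j <;> simp_all

theorem P4.finset_eq_map [DecidableEq X] {x y z u : X} (hp : P4 x y z u) :
    ({x, y, z, u} : Finset X) = univ.map ⟨_, hp.injective⟩ := by
  ext
  simp [Fin.exists_fin_succ]
  tauto

theorem P5.finset_eq_map [DecidableEq X] {a b c d e : X} (hp : P5 a b c d e) :
    ({a, b, c, d, e} : Finset X) = univ.map ⟨_, hp.injective⟩ := by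
  ext
  simp [Fin.exists_fin_succ]
  tauto

theorem P5.card_eq [DecidableEq X] {a b c d e : X} (hp : P5 a b c d e) :
    ({a, b, c, d, e} : Finset X).card = 5 := by
  rw [hp.finset_eq_map, card_map, card_univ, Fintype.card_fin]

section TripleCount

open Classical

variable [DecidableEq X] {δ : X → X → X → Option M}

noncomputable def tripleCount (δ : X → X → X → Option M) (S : Finset X) (a : Option M) :
    ℕ :=
  {T : Finset X | T ∈ S.powersetCard 3 ∧ ValOn δ T a}.ncard

theorem tripleCount_eq_card_filter (S : Finset X) (a : Option M) :
    tripleCount δ S a = #{T ∈ S.powersetCard 3 | ValOn δ T a} := by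
  rw [tripleCount, ← Set.ncard_coe_finset]
  congr 1
  ext T
  simp

theorem tripleCount_le_choose (S : Finset X) (a : Option M) :
    tripleCount δ S a ≤ S.card.choose 3 := by
  rw [tripleCount_eq_card_filter, ← card_powersetCard]
  exact card_filter_le _ _

theorem tripleCount_map {n : ℕ} (g : Fin n ↪ X) (a : Option M) :
    tripleCount δ (univ.map g) a = #{T ∈ univ.powersetCard 3 | ValOn δ (T.map g) a} := by
  rw [tripleCount_eq_card_filter, powersetCard_map, filter_map, card_map]
  rfl

theorem tripleCount_four (hs : Symm3 δ) {x y z u : X} (hp : P4 x y z u) (a : Option M) :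
    tripleCount δ {x, y, z, u} a =
      (if δ x y z = a then 1 else 0) + (if δ x y u = a then 1 else 0) +
      (if δ x z u = a then 1 else 0) + (if δ y z u = a then 1 else 0) := by
  rw [hp.finset_eq_map]
  obtain ⟨hxy, hxz, hxu, hyz, hyu, hzu⟩ := hp
  rw [tripleCount_map,
    show (univ : Finset (Fin 4)).powersetCard 3 = {{0, 1, 2}, {0, 1, 3}, {0, 2, 3}, {1, 2, 3}}
      by decide,
    card_filter]
  repeat rw [sum_insert (by decide)]
  rw [sum_singleton]
  simp [hs.valOn_iff, *, add_assoc]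

theorem tripleCount_five (hs : Symm3 δ) {a b c d e : X} (hp : P5 a b c d e) (v : Option M) :
    tripleCount δ {a, b, c, d, e} v =
      (if δ a b c = v then 1 else 0) + (if δ a b d = v then 1 else 0) +
      (if δ a c d = v then 1 else 0) + (if δ b c d = v then 1 else 0) +
      (if δ a b e = v then 1 else 0) + (if δ a c e = v then 1 else 0) +
      (if δ a d e = v then 1 else 0) + (if δ b c e = v then 1 else 0) +
      (if δ b d e = v then 1 else 0) + (if δ c d e = v then 1 else 0) := by
  rw [hp.finset_eq_map]
  obtain ⟨⟨hab, hac, had, hbc, hbd, hcd⟩, hae, hbe, hce, hde⟩ := hp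
  rw [tripleCount_map,
    show (univ : Finset (Fin 5)).powersetCard 3 = {{0, 1, 2}, {0, 1, 3}, {0, 2, 3}, {1, 2, 3},
      {0, 1, 4}, {0, 2, 4}, {0, 3, 4}, {1, 2, 4}, {1, 3, 4}, {2, 3, 4}} by decide,
    card_filter]
  repeat rw [sum_insert (by decide)]
  rw [sum_singleton]
  simp [hs.valOn_iff, *, add_assoc]

theorem Partitioned.tripleCount_le (hs : Symm3 δ) {S : Finset X} {n m : ℕ}
    (h : Partitioned δ S n m) (c : Option M) : tripleCount δ S c ≤ max n m := by
  obtain ⟨a, b, -, ha, hb, hcover⟩ := h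
  by_cases hca : c = a
  · exact hca ▸ ha ▸ le_max_left _ _
  by_cases hcb : c = b
  · exact hcb ▸ hb ▸ le_max_right _ _
  suffices {T : Finset X | T ∈ S.powersetCard 3 ∧ ValOn δ T c} = ∅ by
    rw [tripleCount, this, Set.ncard_empty]
    exact Nat.zero_le _
  refine Set.eq_empty_of_forall_notMem fun T ⟨hT, hc⟩ => ?_
  rcases hcover T hT with h | h
  exacts [hca (hs.valOn_unique hc h), hcb (hs.valOn_unique hc h)]

theorem partitioned_of_tripleCount (hs : Symm3 δ) {S : Finset X} {n m : ℕ} {a b : Option M}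
    (hab : a ≠ b) (ha : tripleCount δ S a = n) (hb : tripleCount δ S b = m)
    (hnm : n + m = S.card.choose 3) : Partitioned δ S n m := by
  refine ⟨a, b, hab, ha, hb, fun T hT => ?_⟩
  rw [tripleCount_eq_card_filter] at ha hb
  have hdisj :
      Disjoint {T ∈ S.powersetCard 3 | ValOn δ T a} {T ∈ S.powersetCard 3 | ValOn δ T b} :=
    disjoint_filter.2 fun T _ hTa hTb => hab (hs.valOn_unique hTa hTb)
  have hunion : {T ∈ S.powersetCard 3 | ValOn δ T a} ∪ {T ∈ S.powersetCard 3 | ValOn δ T b}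
      = S.powersetCard 3 :=
    eq_of_subset_of_card_le (union_subset (filter_subset _ _) (filter_subset _ _))
      (by rw [card_union_of_disjoint hdisj, ha, hb, hnm, card_powersetCard])
  rw [← hunion, mem_union, mem_filter, mem_filter] at hT
  exact hT.imp And.right And.right

theorem FivePointCond.not_five_five (hs : Symm3 δ) (h5 : FivePointCond δ) {a b c d e : X}
    (hp : P5 a b c d e) {p q : Option M} (hpq : p ≠ q)
    (hp5 : tripleCount δ {a, b, c, d, e} p = 5) (hq5 : tripleCount δ {a, b, c, d, e} q = 5) :
    False :=
  h5 _ hp.card_eq (partitioned_of_tripleCount hs hpq hp5 hq5 (by rw [hp.card_eq]; rfl))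

theorem p5_of_partitioned_four_six {a b c d e : X} (hp : P4 a b c d)
    (h : Partitioned δ {a, b, c, d, e} 4 6) : P5 a b c d e := by
  refine ⟨hp, ?_⟩
  by_contra hne
  obtain ⟨-, q, -, -, hq, -⟩ := h
  have hsub : ({a, b, c, d, e} : Finset X) ⊆ {a, b, c, d} := by
    intro t
    simp only [mem_insert, mem_singleton]
    grind
  have hle := (tripleCount_le_choose (δ := δ) _ q).trans
    (Nat.choose_le_choose 3 ((card_le_card hsub).trans card_le_four))
  change tripleCount δ _ q = 6 at hq
  simp [hq, Nat.choose] at hle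

theorem FourPointCond.constant_or_split (hs : Symm3 δ) (h4 : FourPointCond δ) {x y z u : X}
    (hp : P4 x y z u) :
    (δ x y z = δ x y u ∧ δ x y u = δ x z u ∧ δ x z u = δ y z u) ∨
    (δ x y z = δ x y u ∧ δ x z u = δ y z u ∧ δ x y z ≠ δ x z u) ∨
    (δ x y z = δ x z u ∧ δ x y u = δ y z u ∧ δ x y z ≠ δ x y u) ∨
    (δ x y z = δ y z u ∧ δ x y u = δ x z u ∧ δ x y z ≠ δ x y u) := by
  by_cases hconst : δ x y z = δ x y u ∧ δ x y u = δ x z u ∧ δ x z u = δ y z u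
  · exact Or.inl hconst
  have htwo : ({δ x y z, δ x y u, δ x z u, δ y z u} : Set (Option M)).ncard = 2 := by
    refine le_antisymm (h4 x y z u hp).1 ((Set.one_lt_ncard).2 ?_)
    by_contra! hall
    exact hconst ⟨hall _ (by simp) _ (by simp), hall _ (by simp) _ (by simp),
      hall _ (by simp) _ (by simp)⟩
  obtain ⟨p, q, hpq, hp2, hq2, -⟩ := (h4 x y z u hp).2 htwo
  change tripleCount δ _ p = 2 at hp2
  change tripleCount δ _ q = 2 at hq2
  rw [tripleCount_four hs hp] at hp2 hq2
  grind

end TripleCount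

section Quartets

variable {δ : X → X → X → Option M}

theorem Generates.swap_right (hs : Symm3 δ) {x y z u : X} (h : Generates δ x y z u) :
    Generates δ x y u z := by
  have := hs.swap12; have := hs.swap23
  unfold Generates P4 at *
  grind

variable [DecidableEq X]

theorem generates_of_not_constant (hs : Symm3 δ) (h4 : FourPointCond δ) {a b c d : X}
    (hp : P4 a b c d)
    (hconst : ¬(δ a b c = δ a b d ∧ δ a b d = δ a c d ∧ δ a c d = δ b c d)) :
    Generates δ a b c d ∨ Generates δ a c b d ∨ Generates δ a d b c := by
  have := hs.swap12; have := hs.swap23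
  have := h4.constant_or_split hs hp
  unfold Generates P4 at *
  grind

theorem generates_of_constant_of_partitioned (hs : Symm3 δ) (h4 : FourPointCond δ)
    {a b c d e : X} (hp : P5 a b c d e)
    (hconst : δ a b c = δ a b d ∧ δ a b d = δ a c d ∧ δ a c d = δ b c d)
    (hpart : Partitioned δ {a, b, c, d, e} 4 6) :
    Generates δ a b c d ∨ Generates δ a c b d ∨ Generates δ a d b c := by
  have hle := hpart.tripleCount_le hs (δ a b c)
  rw [tripleCount_five hs hp] at hle
  obtain ⟨⟨hab, hac, had, hbc, hbd, hcd⟩, hae, hbe, hce, hde⟩ := hp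
  have := hs.swap12; have := hs.swap23
  -- By `hle` no 4-subset `{s, t, r, e}` is constant, so it splits 2-2 and exactly one of
  -- `δ s t e`, `δ s r e`, `δ t r e` equals `δ a b c`.
  have := h4.constant_or_split hs ⟨hab, hac, hae, hbc, hbe, hce⟩
  have := h4.constant_or_split hs ⟨hab, had, hae, hbd, hbe, hde⟩
  have := h4.constant_or_split hs ⟨hac, had, hae, hcd, hce, hde⟩
  have := h4.constant_or_split hs ⟨hbc, hbd, hbe, hcd, hce, hde⟩
  unfold Generates P4
  by_cases habe : δ a b e = δ a b c
  · grind
  by_cases hace : δ a c e = δ a b c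
  · grind
  · grind

theorem false_of_two_witnessed_quartets (hs : Symm3 δ) (hvan : VanishCond δ)
    (h4 : FourPointCond δ) (h5 : FivePointCond δ) {x y z u e f : X} {v : Option M}
    (hp : P4 x y z u) (hv : δ x y z = v ∧ δ x y u = v ∧ δ x z u = v ∧ δ y z u = v)
    (he : δ x y e = v ∧ δ z u e = v ∧ δ x u e ≠ v ∧
      δ x z e = δ x u e ∧ δ y z e = δ x u e ∧ δ y u e = δ x u e)
    (hf : δ x z f = v ∧ δ y u f = v ∧ δ x u f ≠ v ∧
      δ x y f = δ x u f ∧ δ y z f = δ x u f ∧ δ z u f = δ x u f) : False := by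
  obtain ⟨hxy, hxz, hxu, hyz, hyu, hzu⟩ := hp
  have hv_ne : v ≠ none := hv.1 ▸ hvan.ne_none hxy hxz hyz
  obtain ⟨-, hxe, hye⟩ := hvan.distinct (he.1 ▸ hv_ne)
  obtain ⟨-, hze, hue⟩ := hvan.distinct (he.2.1 ▸ hv_ne)
  obtain ⟨-, hxf, hzf⟩ := hvan.distinct (hf.1 ▸ hv_ne)
  obtain ⟨-, hyf, huf⟩ := hvan.distinct (hf.2.1 ▸ hv_ne)
  have hef : e ≠ f := by
    rintro rfl
    exact hf.2.2.1 (hf.2.2.2.1 ▸ he.1)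
  have := hs.swap12; have := hs.swap23
  have := h4.constant_or_split hs ⟨hxz, hxe, hxf, hze, hzf, hef⟩
  have := h4.constant_or_split hs ⟨hxu, hxe, hxf, hue, huf, hef⟩
  have := h4.constant_or_split hs ⟨hyu, hye, hyf, hue, huf, hef⟩
  by_cases hw : δ x u e = δ x u f
  · have hxzef :
        δ x e f = δ x u e ∧ δ z e f = v ∨ δ x e f = v ∧ δ z e f = δ x u e := by
      grind
    rcases hxzef with ⟨hxef, hzef⟩ | ⟨hxef, hzef⟩
    · have huef : δ u e f = δ x u e := by grind
      have hyef : δ y e f = v := by grind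
      have hp5 : P5 y z u e f := ⟨⟨hyz, hyu, hye, hzu, hze, hue⟩, hyf, hzf, huf, hef⟩
      refine h5.not_five_five hs hp5 (Ne.symm he.2.2.1) ?_ ?_ <;>
        rw [tripleCount_five hs hp5] <;> grind
    · have huef : δ u e f = v := by grind
      have hyef : δ y e f = δ x u e := by grind
      have hp5 : P5 x y u e f := ⟨⟨hxy, hxu, hxe, hyu, hye, hue⟩, hxf, hyf, huf, hef⟩
      refine h5.not_five_five hs hp5 (Ne.symm he.2.2.1) ?_ ?_ <;>
        rw [tripleCount_five hs hp5] <;> grind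
  · -- `{x, z, e, f}` and `{x, u, e, f}` force `δ x e f = δ x u e` and `δ u e f = δ x u f`,
    -- leaving three distinct values on `{y, u, e, f}`.
    grind

theorem not_generates_and_generates (hs : Symm3 δ) (hvan : VanishCond δ) (h4 : FourPointCond δ)
    (h5 : FivePointCond δ) {x y z u : X} (hp : P4 x y z u) :
    ¬(Generates δ x y z u ∧ Generates δ x z y u) := by
  have := hs.swap12; have := hs.swap23
  rintro ⟨⟨-, h1 | ⟨hv1, hv2, hv3, e, he⟩⟩, ⟨-, h2 | ⟨hv1', hv2', hv3', f, hf⟩⟩⟩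
  · grind
  · grind
  · grind
  · exact false_of_two_witnessed_quartets hs hvan h4 h5 hp (e := e) (f := f) (v := δ x y z)
      (by grind) (by grind) (by grind)

end Quartets

theorem fully_resolved_generates_complete_general
    {X M : Type} [DecidableEq X]
    (δ : X → X → X → Option M) (hδ : IsSymbolicTernaryMetric δ)
    (hfr : FullyResolved δ) :
    CompleteQ (Generates δ) := by
  obtain ⟨hs, hvan, h4, h5⟩ := hδ
  intro a b c d hp
  have ⟨hab, hac, had, hbc, hbd, hcd⟩ := hp
  refine ⟨?_, not_generates_and_generates hs hvan h4 h5 hp, ?_, ?_⟩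
  · by_cases hconst : δ a b c = δ a b d ∧ δ a b d = δ a c d ∧ δ a c d = δ b c d
    · obtain ⟨e, he⟩ := hfr a b c d hp (by simp [← hconst.1, ← hconst.2.1, ← hconst.2.2])
      exact generates_of_constant_of_partitioned hs h4 (p5_of_partitioned_four_six hp he)
        hconst he
    · exact generates_of_not_constant hs h4 hp hconst
  · exact fun ⟨h1, h2⟩ => not_generates_and_generates hs hvan h4 h5
      ⟨hab, had, hac, hbd, hbc, hcd.symm⟩ ⟨h1.swap_right hs, h2⟩
  · exact fun ⟨h1, h2⟩ => not_generates_and_generates hs hvan h4 h5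
      ⟨hac, had, hab, hcd, hbc.symm, hbd.symm⟩ ⟨h1.swap_right hs, h2.swap_right hs⟩

/-- A fully resolved symbolic ternary metric generates a complete
quartet system: for every 4 distinct taxa, exactly one of the three quartets is
generated. -/
theorem fully_resolved_generates_complete
    {X M : Type} [Fintype X] [DecidableEq X] [Fintype M] [Nonempty M]
    (hX : 3 ≤ Fintype.card X)
    (δ : X → X → X → Option M) (hδ : IsSymbolicTernaryMetric δ)
    (hfr : FullyResolved δ) :
    CompleteQ (Generates δ) :=
  fully_resolved_generates_complete_general δ hδ hfr

end PhyloPaper
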